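/- Let γ ≥ 1 and let (a,b) be the binary pair of length N = 26^γ defined recursively by (a^{(1)},b^{(1)}) = K_{26} and (a^{(j+1)},b^{(j+1)}) = Turyn(K_{26}, (a^{(j)},b^{(j)})) for 1 ≤ j < γ, with (a,b) = (a^{(γ)},b^{(γ)}). Define c_i = b_{N−1−i}, d_i = −a_{N−1−i}, e = a||c, f = b||d (length 2N). Let x_0, x_1, y_0, y_1 be complex numbers of modulus 1 satisfying x_0 − conj(y_1) = 0, x_1 + conj(y_0) = 0, x_0 = x_1, and conj(y_0) = −conj(y_1). Define g = (x_0, e_0, …, e_{2N−1}, y_0) and h = (x_1, f_0, …, f_{2N−1}, y_1) of length 2N+2. Then (g,h) is a (2N+2, 12N/26+1)-CZCP. -/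

import Mathlib

/-- Aperiodic cross-correlation at shift `τ` of two length-`L` real sequences
(indexed `0, …, L-1`); it vanishes for `τ ≥ L`. -/
noncomputable def rhoR (L : ℕ) (u v : ℕ → ℝ) (τ : ℕ) : ℝ :=
  ∑ k ∈ Finset.range (L - τ), u k * v (k + τ)

/-- A binary sequence of length `L`: all entries in `{+1, -1}`. -/
def IsBinary (L : ℕ) (u : ℕ → ℝ) : Prop := ∀ i < L, u i = 1 ∨ u i = -1

/-- `(u, v)` is a binary Golay complementary pair (GCP) of length `L`:
both are binary and the autocorrelation sums vanish for `1 ≤ τ ≤ L - 1`. -/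
noncomputable def IsGCP (L : ℕ) (u v : ℕ → ℝ) : Prop :=
  IsBinary L u ∧ IsBinary L v ∧
    ∀ τ : ℕ, 1 ≤ τ → τ ≤ L - 1 → rhoR L u u τ + rhoR L v v τ = 0

/-- `(u, v)` (length-`L` real sequences) is an `(L, Z)`-CZCP:
(C1) the autocorrelation sums vanish for `τ ∈ {1,…,Z} ∪ {L-Z,…,L-1}`, and
(C2) the cross-correlation sums vanish for `τ ∈ {L-Z,…,L-1}`. -/
noncomputable def IsCZCPR (L Z : ℕ) (u v : ℕ → ℝ) : Prop :=
  (∀ τ : ℕ, ((1 ≤ τ ∧ τ ≤ Z) ∨ (L - Z ≤ τ ∧ τ ≤ L - 1)) →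
    rhoR L u u τ + rhoR L v v τ = 0) ∧
  (∀ τ : ℕ, (L - Z ≤ τ ∧ τ ≤ L - 1) → rhoR L u v τ + rhoR L v u τ = 0)

/-- Aperiodic cross-correlation at shift `τ` of two length-`L` complex sequences
(indexed `0, …, L-1`); it vanishes for `τ ≥ L`. -/
noncomputable def rhoC (L : ℕ) (u v : ℕ → ℂ) (τ : ℕ) : ℂ :=
  ∑ k ∈ Finset.range (L - τ), u k * (starRingEnd ℂ) (v (k + τ))

/-- `(u, v)` (length-`L` complex sequences) is an `(L, Z)`-CZCP:
(C1) the autocorrelation sums vanish for `τ ∈ {1,…,Z} ∪ {L-Z,…,L-1}`, and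
(C2) the cross-correlation sums vanish for `τ ∈ {L-Z,…,L-1}`. -/
noncomputable def IsCZCP (L Z : ℕ) (u v : ℕ → ℂ) : Prop :=
  (∀ τ : ℕ, ((1 ≤ τ ∧ τ ≤ Z) ∨ (L - Z ≤ τ ∧ τ ≤ L - 1)) →
    rhoC L u u τ + rhoC L v v τ = 0) ∧
  (∀ τ : ℕ, (L - Z ≤ τ ∧ τ ≤ L - 1) → rhoC L u v τ + rhoC L v u τ = 0)

/-- First sequence of the length-10 Golay kernel `K₁₀`: `(+,+,-,+,-,+,-,-,+,+)`. -/
noncomputable def K10a : ℕ → ℝ := fun i =>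
  (([1, 1, -1, 1, -1, 1, -1, -1, 1, 1] : List ℝ).getD i 0)

/-- Second sequence of the length-10 Golay kernel `K₁₀`: `(+,+,-,+,+,+,+,+,-,-)`. -/
noncomputable def K10b : ℕ → ℝ := fun i =>
  (([1, 1, -1, 1, 1, 1, 1, 1, -1, -1] : List ℝ).getD i 0)

/-- First sequence of the length-26 Golay kernel `K₂₆`. -/
noncomputable def K26a : ℕ → ℝ := fun i =>
  (([1, 1, 1, 1, -1, 1, 1, -1, -1, 1, -1, 1, -1, 1, -1, -1, 1, -1, 1, 1, 1, -1, -1, 1, 1, 1] :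
    List ℝ).getD i 0)

/-- Second sequence of the length-26 Golay kernel `K₂₆`. -/
noncomputable def K26b : ℕ → ℝ := fun i =>
  (([1, 1, 1, 1, -1, 1, 1, -1, -1, 1, -1, 1, 1, 1, 1, 1, -1, 1, -1, -1, -1, 1, 1, -1, -1, -1] :
    List ℝ).getD i 0)

/-- Turyn's construction: given `(p, q)` of length `M` and `(c, d)` of length `K`, the
resulting pair `(e, f)` of length `K·M` is given (at index `kM + j`, i.e. `k = i / M`,
`j = i % M`) by `e_{kM+j} = c_k (p_j + q_j)/2 - d_{K-1-k} (q_j - p_j)/2` and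
`f_{kM+j} = d_k (p_j + q_j)/2 + c_{K-1-k} (q_j - p_j)/2`. -/
noncomputable def turynPair (M K : ℕ) (p q c d : ℕ → ℝ) : (ℕ → ℝ) × (ℕ → ℝ) :=
  (fun i => c (i / M) * (p (i % M) + q (i % M)) / 2
      - d (K - 1 - i / M) * (q (i % M) - p (i % M)) / 2,
   fun i => d (i / M) * (p (i % M) + q (i % M)) / 2
      + c (K - 1 - i / M) * (q (i % M) - p (i % M)) / 2)

open Finset Polynomial

/-!
With `U(X) = ∑ uᵢ Xⁱ` and `Ũ(X) = X^(L-1) U(1/X)`, the coefficients of `U Ũ` are the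
aperiodic autocorrelations of `u`, so `(u, v)` is complementary iff `U Ũ + V Ṽ` is a monomial
`c X^(L-1)`. Turyn's construction and the concatenation `e = a‖c`, `f = b‖d` turn such monomial
identities into new ones, so `(e, f)` is complementary of length `2N`. Padding by `x, y` then
leaves only boundary terms in the correlations of `(g, h)`; they cancel by the conditions on
`x₀, x₁, y₀, y₁`, at the large shifts because `aᵢ = bᵢ` for `i < 12N/26`. That head condition
holds for `K₂₆` together with `aᵢ = -bᵢ` on its last 12 entries, and Turyn's construction
propagates the pair of conditions.
-/

def IsComplementaryPair (L : ℕ) (u v : ℕ → ℝ) : Prop :=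
  ∀ τ, 1 ≤ τ → rhoR L u u τ + rhoR L v v τ = 0

lemma rhoR_eq_zero_of_le {L τ : ℕ} (h : L ≤ τ) (u v : ℕ → ℝ) : rhoR L u v τ = 0 := by
  simp [rhoR, Nat.sub_eq_zero_of_le h]

lemma isComplementaryPair_zero (u v : ℕ → ℝ) : IsComplementaryPair 0 u v :=
  fun τ _ => by simp [rhoR_eq_zero_of_le (Nat.zero_le τ)]

noncomputable def seqPoly (L : ℕ) : (ℕ → ℝ) →ₗ[ℝ] ℝ[X] where
  toFun u := ∑ i ∈ range L, C (u i) * X ^ i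
  map_add' u v := by simp only [Pi.add_apply, C_add, add_mul, sum_add_distrib]
  map_smul' a u := by simp only [Pi.smul_apply, smul_eq_mul, C_mul, mul_assoc, ← mul_sum,
    RingHom.id_apply, smul_eq_C_mul]

-- Only the entries `i < L` matter: beyond them truncated subtraction returns `u 0`.
def seqRev (L : ℕ) (u : ℕ → ℝ) : ℕ → ℝ := fun i => u (L - 1 - i)

lemma seqPoly_apply (L : ℕ) (u : ℕ → ℝ) :
    seqPoly L u = ∑ i ∈ range L, C (u i) * X ^ i := rfl

lemma seqPoly_congr {L : ℕ} {u v : ℕ → ℝ} (h : ∀ i < L, u i = v i) :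
    seqPoly L u = seqPoly L v := by
  simp only [seqPoly_apply]
  exact sum_congr rfl fun i hi => by rw [h i (mem_range.1 hi)]

lemma coeff_seqPoly_mul (L n : ℕ) (u w : ℕ → ℝ) :
    (seqPoly L u * seqPoly L w).coeff n
      = ∑ i ∈ range L, if i ≤ n ∧ n - i < L then u i * w (n - i) else 0 := by
  simp only [seqPoly_apply, sum_mul_sum, finsetSum_coeff]
  refine sum_congr rfl fun i hi => ?_
  have hmul : ∀ j, C (u i) * X ^ i * (C (w j) * X ^ j) = C (u i * w j) * X ^ (i + j) := by
    intro j; rw [C_mul, pow_add]; ring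
  simp only [hmul, coeff_C_mul_X_pow]
  split_ifs with h
  · rw [sum_eq_single (n - i) (fun j _ hj => if_neg (by omega)) (fun h' => absurd
      (mem_range.2 h.2) h'), if_pos (by omega)]
  · exact sum_eq_zero fun j hj => if_neg (by simp only [mem_range] at hj; omega)

lemma coeff_seqPoly_mul_seqRev_of_lt {L τ : ℕ} (hτ : τ < L) (u v : ℕ → ℝ) :
    (seqPoly L u * seqPoly L (seqRev L v)).coeff (L - 1 - τ) = rhoR L u v τ := by
  rw [coeff_seqPoly_mul, ← sum_filter, rhoR]
  have hfilter : {i ∈ range L | i ≤ L - 1 - τ ∧ L - 1 - τ - i < L} = range (L - τ) := by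
    ext i; simp only [mem_filter, mem_range]; omega
  rw [hfilter]
  refine sum_congr rfl fun i hi => ?_
  rw [seqRev, show L - 1 - (L - 1 - τ - i) = i + τ by simp only [mem_range] at hi; omega]

lemma coeff_seqPoly_mul_seqRev_add (L τ : ℕ) (u v : ℕ → ℝ) :
    (seqPoly L u * seqPoly L (seqRev L v)).coeff (L - 1 + τ) = rhoR L v u τ := by
  rw [coeff_seqPoly_mul, ← sum_filter, rhoR]
  have hfilter : {i ∈ range L | i ≤ L - 1 + τ ∧ L - 1 + τ - i < L} = Ico τ L := by
    ext i; simp only [mem_filter, mem_range, mem_Ico]; omega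
  rw [hfilter, sum_Ico_eq_sum_range]
  refine sum_congr rfl fun k hk => ?_
  rw [seqRev, show L - 1 - (L - 1 + τ - (τ + k)) = k by simp only [mem_range] at hk; omega,
    mul_comm, add_comm τ k]

theorem isComplementaryPair_iff_seqPoly {L : ℕ} {u v : ℕ → ℝ} :
    IsComplementaryPair L u v ↔ ∃ c, seqPoly L u * seqPoly L (seqRev L u)
      + seqPoly L v * seqPoly L (seqRev L v) = C c * X ^ (L - 1) := by
  constructor
  · intro h
    refine ⟨rhoR L u u 0 + rhoR L v v 0, ext fun n => ?_⟩
    rw [coeff_add, coeff_C_mul_X_pow]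
    rcases lt_or_ge n (L - 1) with hn | hn
    · obtain ⟨τ, rfl, hτ, hτL⟩ : ∃ τ, n = L - 1 - τ ∧ 1 ≤ τ ∧ τ < L :=
        ⟨L - 1 - n, by omega, by omega, by omega⟩
      rw [coeff_seqPoly_mul_seqRev_of_lt hτL, coeff_seqPoly_mul_seqRev_of_lt hτL,
        h τ hτ, if_neg (by omega)]
    · obtain ⟨τ, rfl⟩ : ∃ τ, n = L - 1 + τ := ⟨n - (L - 1), by omega⟩
      rw [coeff_seqPoly_mul_seqRev_add, coeff_seqPoly_mul_seqRev_add]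
      rcases Nat.eq_zero_or_pos τ with rfl | hτ
      · simp
      · rw [h τ hτ, if_neg (by omega)]
  · rintro ⟨c, hc⟩ τ hτ
    rcases lt_or_ge τ L with hτL | hτL
    · have := congrArg (coeff · (L - 1 - τ)) hc
      simp only [coeff_add, coeff_seqPoly_mul_seqRev_of_lt hτL, coeff_C_mul_X_pow] at this
      rwa [if_neg (by omega)] at this
    · simp [rhoR_eq_zero_of_le hτL]

lemma sum_range_mul_eq_sum_sum {β : Type*} [AddCommMonoid β] (K M : ℕ) (f : ℕ → β) :
    ∑ i ∈ range (K * M), f i = ∑ k ∈ range K, ∑ j ∈ range M, f (k * M + j) := by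
  induction K with
  | zero => simp
  | succ K ih => rw [Nat.succ_mul, sum_range_add, ih, sum_range_succ]

lemma seqPoly_mul_eq_expand {K M : ℕ} {w A B P Q : ℕ → ℝ}
    (hw : ∀ k < K, ∀ j < M, w (k * M + j) = A k * P j + B k * Q j) :
    seqPoly (K * M) w
      = expand ℝ M (seqPoly K A) * seqPoly M P + expand ℝ M (seqPoly K B) * seqPoly M Q := by
  simp only [seqPoly_apply, sum_range_mul_eq_sum_sum, map_sum, map_mul, expand_C, map_pow,
    expand_X, sum_mul_sum, ← sum_add_distrib]
  refine sum_congr rfl fun k hk => sum_congr rfl fun j hj => ?_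
  rw [hw k (mem_range.1 hk) j (mem_range.1 hj), C_add, C_mul, C_mul, pow_add, pow_mul]
  ring

lemma turynPair_apply {M K k j : ℕ} (hj : j < M) (p q c d : ℕ → ℝ) :
    (turynPair M K p q c d).1 (k * M + j)
        = c k * (p j + q j) / 2 - d (K - 1 - k) * (q j - p j) / 2 ∧
      (turynPair M K p q c d).2 (k * M + j)
        = d k * (p j + q j) / 2 + c (K - 1 - k) * (q j - p j) / 2 := by
  have hM : 0 < M := by omega
  have hdiv : (k * M + j) / M = k := by
    rw [mul_comm, Nat.mul_add_div hM, Nat.div_eq_of_lt hj, add_zero]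
  have hmod : (k * M + j) % M = j := by rw [mul_comm, Nat.mul_add_mod, Nat.mod_eq_of_lt hj]
  simp only [turynPair, hdiv, hmod, and_self]

lemma sub_one_sub_mul_add {K M k j : ℕ} (hk : k < K) (hj : j < M) :
    K * M - 1 - (k * M + j) = (K - 1 - k) * M + (M - 1 - j) := by
  obtain ⟨r, rfl⟩ := Nat.exists_eq_add_of_lt hk
  rw [show k + r + 1 - 1 - k = r by omega, add_mul, add_mul, one_mul]
  omega

lemma seqPoly_turynPair (M K : ℕ) (p q c d : ℕ → ℝ) :
    seqPoly (K * M) (turynPair M K p q c d).1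
        = expand ℝ M (seqPoly K c) * seqPoly M ((2⁻¹ : ℝ) • (p + q))
          + expand ℝ M (seqPoly K (-seqRev K d)) * seqPoly M ((2⁻¹ : ℝ) • (q - p)) ∧
      seqPoly (K * M) (turynPair M K p q c d).2
        = expand ℝ M (seqPoly K d) * seqPoly M ((2⁻¹ : ℝ) • (p + q))
          + expand ℝ M (seqPoly K (seqRev K c)) * seqPoly M ((2⁻¹ : ℝ) • (q - p)) := by
  refine ⟨seqPoly_mul_eq_expand fun k _ j hj => ?_, seqPoly_mul_eq_expand fun k _ j hj => ?_⟩
  · rw [(turynPair_apply hj p q c d).1]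
    simp only [seqRev, Pi.neg_apply, Pi.smul_apply, Pi.add_apply, Pi.sub_apply, smul_eq_mul]
    ring
  · rw [(turynPair_apply hj p q c d).2]
    simp only [seqRev, Pi.smul_apply, Pi.add_apply, Pi.sub_apply, smul_eq_mul]
    ring

lemma seqPoly_seqRev_turynPair (M K : ℕ) (p q c d : ℕ → ℝ) :
    seqPoly (K * M) (seqRev (K * M) (turynPair M K p q c d).1)
        = expand ℝ M (seqPoly K (seqRev K c))
            * seqPoly M ((2⁻¹ : ℝ) • (seqRev M p + seqRev M q))
          + expand ℝ M (seqPoly K (-d))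
            * seqPoly M ((2⁻¹ : ℝ) • (seqRev M q - seqRev M p)) ∧
      seqPoly (K * M) (seqRev (K * M) (turynPair M K p q c d).2)
        = expand ℝ M (seqPoly K (seqRev K d))
            * seqPoly M ((2⁻¹ : ℝ) • (seqRev M p + seqRev M q))
          + expand ℝ M (seqPoly K c)
            * seqPoly M ((2⁻¹ : ℝ) • (seqRev M q - seqRev M p)) := by
  refine ⟨seqPoly_mul_eq_expand fun k hk j hj => ?_, seqPoly_mul_eq_expand fun k hk j hj => ?_⟩
  · rw [seqRev, sub_one_sub_mul_add hk hj, (turynPair_apply (by omega) p q c d).1,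
      show K - 1 - (K - 1 - k) = k by omega]
    simp only [seqRev, Pi.neg_apply, Pi.smul_apply, Pi.add_apply, Pi.sub_apply, smul_eq_mul]
    ring
  · rw [seqRev, sub_one_sub_mul_add hk hj, (turynPair_apply (by omega) p q c d).2,
      show K - 1 - (K - 1 - k) = k by omega]
    simp only [seqRev, Pi.smul_apply, Pi.add_apply, Pi.sub_apply, smul_eq_mul]
    ring

theorem IsComplementaryPair.turyn {M K : ℕ} {p q c d : ℕ → ℝ}
    (hpq : IsComplementaryPair M p q) (hcd : IsComplementaryPair K c d) :
    IsComplementaryPair (K * M) (turynPair M K p q c d).1 (turynPair M K p q c d).2 := by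
  rcases Nat.eq_zero_or_pos (K * M) with hKM | hKM
  · rw [hKM]
    exact isComplementaryPair_zero _ _
  obtain ⟨hK, hM⟩ := CanonicallyOrderedAdd.mul_pos.mp hKM
  obtain ⟨c₁, hc₁⟩ := isComplementaryPair_iff_seqPoly.1 hpq
  obtain ⟨c₂, hc₂⟩ := isComplementaryPair_iff_seqPoly.1 hcd
  obtain ⟨hE, hF⟩ := seqPoly_turynPair M K p q c d
  obtain ⟨hE', hF'⟩ := seqPoly_seqRev_turynPair M K p q c d
  have hexp : K * M - 1 = M * (K - 1) + (M - 1) := by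
    obtain ⟨K, rfl⟩ := Nat.exists_eq_add_of_lt hK
    rw [zero_add, Nat.add_sub_cancel, Nat.succ_mul, mul_comm M K]
    omega
  have hC : C (c₁ * c₂ / 2) = C c₂ * (C 2⁻¹ * C 2⁻¹ * 2 * C c₁) := by
    simp only [← C_ofNat, ← C_mul]; congr 1; ring
  refine isComplementaryPair_iff_seqPoly.2 ⟨c₁ * c₂ / 2, ?_⟩
  rw [hE, hE', hF, hF']
  simp only [map_smul, map_add, map_sub, map_neg, smul_eq_C_mul]
  calc _ = expand ℝ M
          (seqPoly K c * seqPoly K (seqRev K c) + seqPoly K d * seqPoly K (seqRev K d))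
        * (C 2⁻¹ * C 2⁻¹ * 2 * (seqPoly M p * seqPoly M (seqRev M p)
          + seqPoly M q * seqPoly M (seqRev M q))) := by
        simp only [map_add, map_mul]; ring
    _ = _ := by
        rw [hc₁, hc₂, hexp, hC, pow_add]
        simp only [map_mul, expand_C, map_pow, expand_X, ← pow_mul]
        ring

-- The paper's `a‖c` with `cᵢ = b_{N-1-i}`; its `f = b‖d` is `mirrorConcat N b (-a)`.
def mirrorConcat (N : ℕ) (a b : ℕ → ℝ) : ℕ → ℝ :=
  fun i => if i < N then a i else b (N - 1 - (i - N))

lemma mirrorConcat_of_lt {N i : ℕ} (h : i < N) (a b : ℕ → ℝ) : mirrorConcat N a b i = a i :=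
  if_pos h

lemma mirrorConcat_two_mul_sub_one_sub {N i : ℕ} (h : i < N) (a b : ℕ → ℝ) :
    mirrorConcat N a b (2 * N - 1 - i) = b i := by
  rw [mirrorConcat, if_neg (by omega), show N - 1 - (2 * N - 1 - i - N) = i by omega]

lemma seqPoly_mirrorConcat (N : ℕ) (a b : ℕ → ℝ) :
    seqPoly (2 * N) (mirrorConcat N a b) = seqPoly N a + X ^ N * seqPoly N (seqRev N b) := by
  simp only [seqPoly_apply, two_mul, sum_range_add, mul_sum]
  congr 1
  · exact sum_congr rfl fun i hi => by rw [mirrorConcat_of_lt (mem_range.1 hi)]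
  · refine sum_congr rfl fun k _ => ?_
    rw [mirrorConcat, if_neg (by omega), Nat.add_sub_cancel_left, seqRev, pow_add]
    ring

lemma seqRev_mirrorConcat {N i : ℕ} (h : i < 2 * N) (a b : ℕ → ℝ) :
    seqRev (2 * N) (mirrorConcat N a b) i = mirrorConcat N b a i := by
  simp only [seqRev, mirrorConcat]
  split_ifs <;> congr 1 <;> omega

theorem IsComplementaryPair.mirrorConcat {N : ℕ} {a b : ℕ → ℝ}
    (hab : IsComplementaryPair N a b) :
    IsComplementaryPair (2 * N) (mirrorConcat N a b) (mirrorConcat N b (-a)) := by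
  rcases Nat.eq_zero_or_pos N with rfl | hN
  · exact isComplementaryPair_zero _ _
  obtain ⟨c, hc⟩ := isComplementaryPair_iff_seqPoly.1 hab
  refine isComplementaryPair_iff_seqPoly.2 ⟨2 * c, ?_⟩
  rw [seqPoly_congr fun i hi => seqRev_mirrorConcat hi a b,
    seqPoly_congr fun i hi => seqRev_mirrorConcat hi b (-a)]
  simp only [seqPoly_mirrorConcat, show seqRev N (-a) = -seqRev N a from rfl, map_neg]
  calc _ = C 2 * X ^ N * (seqPoly N a * seqPoly N (seqRev N a)
        + seqPoly N b * seqPoly N (seqRev N b)) := by rw [C_ofNat]; ring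
    _ = _ := by
        rw [hc, show 2 * N - 1 = N + (N - 1) by omega, pow_add, C_mul]
        ring

lemma rhoR_mirrorConcat_cross_add {N τ : ℕ} (hτ : N ≤ τ) {a b : ℕ → ℝ}
    (hab : ∀ i < 2 * N - τ, a i = b i) :
    rhoR (2 * N) (mirrorConcat N a b) (mirrorConcat N b (-a)) τ
      + rhoR (2 * N) (mirrorConcat N b (-a)) (mirrorConcat N a b) τ = 0 := by
  rw [rhoR, rhoR, ← sum_add_distrib]
  refine sum_eq_zero fun k hk => ?_
  have hk' := mem_range.1 hk
  simp only [mirrorConcat, if_pos (show k < N by omega), if_neg (show ¬ k + τ < N by omega),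
    Pi.neg_apply, hab k hk', hab (N - 1 - (k + τ - N)) (by omega)]
  ring

-- `(x, u₀, …, u_{n-1}, y)`
def padSeq (n : ℕ) (x : ℂ) (u : ℕ → ℝ) (y : ℂ) : ℕ → ℂ :=
  fun i => if i = 0 then x else if i ≤ n then (u (i - 1) : ℂ) else y

lemma padSeq_zero (n : ℕ) (x : ℂ) (u : ℕ → ℝ) (y : ℂ) : padSeq n x u y 0 = x :=
  if_pos rfl

lemma padSeq_succ_of_lt {n i : ℕ} (h : i < n) (x : ℂ) (u : ℕ → ℝ) (y : ℂ) :
    padSeq n x u y (i + 1) = u i := by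
  rw [padSeq, if_neg (Nat.succ_ne_zero i), if_pos (Nat.succ_le_of_lt h), Nat.add_sub_cancel]

lemma padSeq_of_lt {n i : ℕ} (h : n < i) (x : ℂ) (u : ℕ → ℝ) (y : ℂ) :
    padSeq n x u y i = y := by
  rw [padSeq, if_neg (by omega), if_neg (by omega)]

lemma rhoC_padSeq {n i : ℕ} (hi : i < n) (x x' y y' : ℂ) (u v : ℕ → ℝ) :
    rhoC (n + 2) (padSeq n x u y) (padSeq n x' v y') (i + 1)
      = x * v i + rhoR n u v (i + 1) + u (n - 1 - i) * starRingEnd ℂ y' := by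
  obtain ⟨m, rfl⟩ : ∃ m, n = m + (i + 1) := ⟨n - (i + 1), by omega⟩
  rw [rhoC, show m + (i + 1) + 2 - (i + 1) = m + 1 + 1 by omega, sum_range_succ, sum_range_succ',
    zero_add, padSeq_zero, padSeq_succ_of_lt (by omega), padSeq_succ_of_lt (by omega),
    padSeq_of_lt (by omega), show m + (i + 1) - 1 - i = m by omega, Complex.conj_ofReal, rhoR,
    Nat.add_sub_cancel, Complex.ofReal_sum]
  have hmid : ∀ k ∈ range m, padSeq (m + (i + 1)) x u y (k + 1)
      * starRingEnd ℂ (padSeq (m + (i + 1)) x' v y' (k + 1 + (i + 1)))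
      = ((u k * v (k + (i + 1)) : ℝ) : ℂ) := fun k hk => by
    have hk' := mem_range.1 hk
    rw [padSeq_succ_of_lt (by omega), show k + 1 + (i + 1) = k + (i + 1) + 1 by omega,
      padSeq_succ_of_lt (by omega), Complex.conj_ofReal, Complex.ofReal_mul]
  rw [sum_congr rfl hmid]
  ring

lemma rhoC_padSeq_succ (n : ℕ) (x x' y y' : ℂ) (u v : ℕ → ℝ) :
    rhoC (n + 2) (padSeq n x u y) (padSeq n x' v y') (n + 1) = x * starRingEnd ℂ y' := by
  rw [rhoC, show n + 2 - (n + 1) = 1 by omega, sum_range_one, zero_add, padSeq_zero,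
    padSeq_of_lt (by omega)]

theorem isCZCP_padSeq_mirrorConcat {N m : ℕ} {a b : ℕ → ℝ}
    (hab : IsComplementaryPair N a b) (hmN : m < N) (hhead : ∀ i < m, a i = b i)
    {x y₀ y₁ : ℂ} (hy₀ : starRingEnd ℂ y₀ = -x) (hy₁ : starRingEnd ℂ y₁ = x) :
    IsCZCP (2 * N + 2) (m + 1) (padSeq (2 * N) x (mirrorConcat N a b) y₀)
      (padSeq (2 * N) x (mirrorConcat N b (-a)) y₁) := by
  have hcast : ∀ {r s : ℝ}, r + s = 0 → (r : ℂ) + s = 0 := fun h => by exact_mod_cast h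
  refine ⟨?_, ?_⟩
  · rintro τ (⟨h1, h2⟩ | ⟨h1, h2⟩)
    · obtain ⟨i, hi, rfl⟩ : ∃ i, i < N ∧ τ = i + 1 := ⟨τ - 1, by omega, by omega⟩
      rw [rhoC_padSeq (by omega), rhoC_padSeq (by omega), mirrorConcat_of_lt hi,
        mirrorConcat_of_lt hi, mirrorConcat_two_mul_sub_one_sub hi,
        mirrorConcat_two_mul_sub_one_sub hi, hy₀, hy₁, Pi.neg_apply, Complex.ofReal_neg]
      linear_combination hcast (hab.mirrorConcat (i + 1) (by omega))
    · rcases (by omega : τ = 2 * N + 1 ∨ τ < 2 * N + 1) with rfl | h2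
      · rw [rhoC_padSeq_succ, rhoC_padSeq_succ, hy₀, hy₁]
        ring
      obtain ⟨j, hj, rfl⟩ : ∃ j, j < m ∧ τ = 2 * N - 1 - j + 1 :=
        ⟨2 * N - τ, by omega, by omega⟩
      have hjN : j < N := by omega
      rw [rhoC_padSeq (by omega), rhoC_padSeq (by omega), mirrorConcat_two_mul_sub_one_sub hjN,
        mirrorConcat_two_mul_sub_one_sub hjN, show 2 * N - 1 - (2 * N - 1 - j) = j by omega,
        mirrorConcat_of_lt hjN, mirrorConcat_of_lt hjN, hy₀, hy₁, Pi.neg_apply,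
        Complex.ofReal_neg, hhead j hj]
      linear_combination hcast (hab.mirrorConcat (2 * N - 1 - j + 1) (by omega))
  · rintro τ ⟨h1, h2⟩
    rcases (by omega : τ = 2 * N + 1 ∨ τ < 2 * N + 1) with rfl | h2
    · rw [rhoC_padSeq_succ, rhoC_padSeq_succ, hy₀, hy₁]
      ring
    obtain ⟨j, hj, rfl⟩ : ∃ j, j < m ∧ τ = 2 * N - 1 - j + 1 :=
      ⟨2 * N - τ, by omega, by omega⟩
    have hjN : j < N := by omega
    rw [rhoC_padSeq (by omega), rhoC_padSeq (by omega), mirrorConcat_two_mul_sub_one_sub hjN,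
      mirrorConcat_two_mul_sub_one_sub hjN, show 2 * N - 1 - (2 * N - 1 - j) = j by omega,
      mirrorConcat_of_lt hjN, mirrorConcat_of_lt hjN, hy₀, hy₁, Pi.neg_apply,
      Complex.ofReal_neg]
    linear_combination hcast (rhoR_mirrorConcat_cross_add (N := N) (τ := 2 * N - 1 - j + 1)
      (by omega) fun i hi => hhead i (by omega))

def EqHeadNegTail (m L : ℕ) (u v : ℕ → ℝ) : Prop :=
  (∀ i < m, u i = v i) ∧ ∀ i, L - m ≤ i → i < L → u i = -v i

theorem EqHeadNegTail.turynPair {m M K : ℕ} {p q c d : ℕ → ℝ} (hmK : m ≤ K)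
    (hcd : EqHeadNegTail m K c d) :
    EqHeadNegTail (m * M) (K * M) (turynPair M K p q c d).1 (turynPair M K p q c d).2 := by
  rcases Nat.eq_zero_or_pos M with rfl | hM
  · simp [EqHeadNegTail]
  refine ⟨fun i hi => ?_, fun i hi₁ hi₂ => ?_⟩
  · have hk : i / M < m := (Nat.div_lt_iff_lt_mul hM).2 hi
    simp only [_root_.turynPair]
    generalize i / M = k at hk ⊢
    rw [hcd.1 k hk, hcd.2 (K - 1 - k) (by omega) (by omega)]
    ring
  · have hk₁ : K - m ≤ i / M := (Nat.le_div_iff_mul_le hM).2 (by rwa [Nat.sub_mul])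
    have hk₂ : i / M < K := (Nat.div_lt_iff_lt_mul hM).2 hi₂
    simp only [_root_.turynPair]
    generalize i / M = k at hk₁ hk₂ ⊢
    rw [hcd.2 k hk₁ hk₂, hcd.1 (K - 1 - k) (by omega)]
    ring

lemma isComplementaryPair_K26 : IsComplementaryPair 26 K26a K26b := by
  intro τ hτ
  rcases le_or_gt 26 τ with h | h
  · simp [rhoR_eq_zero_of_le h]
  interval_cases τ <;>
    simp only [rhoR, sum_range_succ, sum_range_zero, K26a, K26b, List.getD_cons_succ,
      List.getD_cons_zero, Nat.reduceSub] <;> norm_num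

lemma eqHeadNegTail_K26 : EqHeadNegTail 12 26 K26a K26b := by
  refine ⟨fun i hi => ?_, fun i hi₁ hi₂ => ?_⟩
  · interval_cases i <;> rfl
  · interval_cases i <;> norm_num [K26a, K26b]

lemma turyn_iterate_K26 {γ : ℕ} {P : ℕ → (ℕ → ℝ) × (ℕ → ℝ)}
    (hP1 : P 1 = (K26a, K26b))
    (hPrec : ∀ j, 1 ≤ j → j < γ →
      P (j + 1) = turynPair 26 (26 ^ j) K26a K26b (P j).1 (P j).2) :
    ∀ j, 1 ≤ j → j ≤ γ → IsComplementaryPair (26 ^ j) (P j).1 (P j).2 ∧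
      EqHeadNegTail (12 * 26 ^ (j - 1)) (26 ^ j) (P j).1 (P j).2 := by
  intro j hj
  induction j, hj using Nat.le_induction with
  | base => exact fun _ => by simpa [hP1] using ⟨isComplementaryPair_K26, eqHeadNegTail_K26⟩
  | succ j hj ih =>
    intro hjγ
    obtain ⟨hcomp, hhead⟩ := ih (by omega)
    rw [hPrec j hj (by omega), pow_succ, Nat.add_sub_cancel,
      show 12 * 26 ^ j = 12 * 26 ^ (j - 1) * 26 by
        rw [mul_assoc, ← pow_succ, Nat.sub_add_cancel hj]]
    have hmK : 12 * 26 ^ (j - 1) ≤ 26 ^ j := by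
      rw [show 26 ^ j = 26 ^ (j - 1) * 26 by rw [← pow_succ, Nat.sub_add_cancel hj]]; omega
    exact ⟨isComplementaryPair_K26.turyn hcomp, hhead.turynPair hmK⟩

theorem stmt_8_general (γ : ℕ) (hγ : 1 ≤ γ)
    (P : ℕ → (ℕ → ℝ) × (ℕ → ℝ))
    (hP1 : P 1 = (K26a, K26b))
    (hPrec : ∀ j, 1 ≤ j → j < γ →
      P (j + 1) = turynPair 26 (26 ^ j) K26a K26b (P j).1 (P j).2)
    (N : ℕ) (hN : N = 26 ^ γ)
    (a b : ℕ → ℝ) (ha : a = (P γ).1) (hb : b = (P γ).2)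
    (e f : ℕ → ℝ)
    (he : ∀ i, e i = if i < N then a i else b (N - 1 - (i - N)))
    (hf : ∀ i, f i = if i < N then b i else -a (N - 1 - (i - N)))
    (x0 x1 y0 y1 : ℂ)
    (cc1 : x0 - (starRingEnd ℂ) y1 = 0) (cc2 : x1 + (starRingEnd ℂ) y0 = 0)
    (cc3 : x0 = x1)
    (g h : ℕ → ℂ)
    (hg : ∀ i, g i = if i = 0 then x0 else if i ≤ 2 * N then ((e (i - 1) : ℝ) : ℂ) else y0)
    (hh : ∀ i, h i = if i = 0 then x1 else if i ≤ 2 * N then ((f (i - 1) : ℝ) : ℂ) else y1) :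
    IsCZCP (2 * N + 2) (12 * N / 26 + 1) g h := by
  obtain ⟨hcomp, hhead, -⟩ := turyn_iterate_K26 hP1 hPrec γ hγ le_rfl
  obtain rfl : e = mirrorConcat N a b := funext he
  obtain rfl : f = mirrorConcat N b (-a) := funext hf
  obtain rfl : g = padSeq (2 * N) x0 (mirrorConcat N a b) y0 := funext hg
  obtain rfl : h = padSeq (2 * N) x0 (mirrorConcat N b (-a)) y1 := funext fun i => cc3 ▸ hh i
  obtain ⟨k, rfl⟩ : ∃ k, γ = k + 1 := ⟨γ - 1, by omega⟩
  subst hN ha hb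
  rw [Nat.add_sub_cancel] at hhead
  rw [show 12 * 26 ^ (k + 1) / 26 = 12 * 26 ^ k by
    rw [pow_succ, ← mul_assoc, Nat.mul_div_cancel _ (by norm_num)]]
  refine isCZCP_padSeq_mirrorConcat hcomp ?_ hhead (by linear_combination cc2 + cc3)
    (by linear_combination -cc1)
  rw [pow_succ]
  have := pow_pos (show 0 < 26 by norm_num) k
  omega

/-- Theorem 3 of the paper, case `N = 26^γ`: let `(a, b)` be the binary GCP
of length `N = 26^γ` obtained by iterating Turyn's construction on the kernel `K₂₆`,
put `c_i = b_{N-1-i}`, `d_i = -a_{N-1-i}`, `e = a‖c`, `f = b‖d` (length `2N`), and let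
`x₀, x₁, y₀, y₁` be unimodular complex numbers with `x₀ - conj y₁ = 0`,
`x₁ + conj y₀ = 0`, `x₀ = x₁`, `conj y₀ = -conj y₁`.  Then
`g = (x₀, e₀, …, e_{2N-1}, y₀)` and `h = (x₁, f₀, …, f_{2N-1}, y₁)` form a
`(2N+2, 12N/26+1)`-CZCP. -/
theorem stmt_8 (γ : ℕ) (hγ : 1 ≤ γ)
    (P : ℕ → (ℕ → ℝ) × (ℕ → ℝ))
    (hP1 : P 1 = (K26a, K26b))
    (hPrec : ∀ j, 1 ≤ j → j < γ →
      P (j + 1) = turynPair 26 (26 ^ j) K26a K26b (P j).1 (P j).2)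
    (N : ℕ) (hN : N = 26 ^ γ)
    (a b : ℕ → ℝ) (ha : a = (P γ).1) (hb : b = (P γ).2)
    (e f : ℕ → ℝ)
    (he : ∀ i, e i = if i < N then a i else b (N - 1 - (i - N)))
    (hf : ∀ i, f i = if i < N then b i else -a (N - 1 - (i - N)))
    (x0 x1 y0 y1 : ℂ)
    (hx0 : ‖x0‖ = 1) (hx1 : ‖x1‖ = 1)
    (hy0 : ‖y0‖ = 1) (hy1 : ‖y1‖ = 1)
    (cc1 : x0 - (starRingEnd ℂ) y1 = 0) (cc2 : x1 + (starRingEnd ℂ) y0 = 0)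
    (cc3 : x0 = x1) (cc4 : (starRingEnd ℂ) y0 = -(starRingEnd ℂ) y1)
    (g h : ℕ → ℂ)
    (hg : ∀ i, g i = if i = 0 then x0 else if i ≤ 2 * N then ((e (i - 1) : ℝ) : ℂ) else y0)
    (hh : ∀ i, h i = if i = 0 then x1 else if i ≤ 2 * N then ((f (i - 1) : ℝ) : ℂ) else y1) :
    IsCZCP (2 * N + 2) (12 * N / 26 + 1) g h :=
  stmt_8_general γ hγ P hP1 hPrec N hN a b ha hb e f he hf x0 x1 y0 y1 cc1 cc2 cc3 g h hg hh
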